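/- arXiv:2502.08740 — 2 statements merged into one kernel-verified Lean document; each statement's English description precedes it below -/
import Mathlib

section
/- First relativistic transport coefficient: let λ > 0 and, for r ∈ ℝ∖{0}, define S(r) = √( ((1−λ)/2)² + λ·arctan(r)/r ), Γ(r) = −(1+λ)/2 + S(r), and q(r) = r·( (1−λ)/2 + S(r) ). Then lim_{r→0} Γ(r)/q(r)² = −λ/(3(1+λ)). (Equivalently, the exact relativistic radiative diffusivity is D⁽¹⁾/τ = λ/(3(1+λ)), replacing Spiegel's value λ/3.) -/
/-!
Statement 14: first relativistic transport coefficient: along the parametric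
solution `(q(r), Γ(r))` of the exact scatteringless dispersion relation,
`Γ(r)/q(r)² → −λ/(3(1+λ))` as `r → 0`, i.e. `D⁽¹⁾/τ = λ/(3(1+λ))`.
-/

noncomputable section
open Real Filter

/-- `S(r) = √(((1−λ)/2)² + λ·arctan(r)/r)`. -/
def Sfun (lam r : ℝ) : ℝ := Real.sqrt (((1 - lam) / 2) ^ 2 + lam * Real.arctan r / r)

/-- `Γ(r) = −(1+λ)/2 + S(r)`. -/
def Gam (lam r : ℝ) : ℝ := -(1 + lam) / 2 + Sfun lam r

/-- `q(r) = r((1−λ)/2 + S(r))`. -/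
def qfun (lam r : ℝ) : ℝ := r * ((1 - lam) / 2 + Sfun lam r)

lemma arctan_cubic_limit :
    Tendsto (fun r : ℝ => (Real.arctan r - r) / r ^ 3) (nhdsWithin 0 {0}ᶜ) (nhds (-(1/3))) := by
  have h := HasDerivAt.lhopital_zero_nhdsNE
    (f := fun r : ℝ => Real.arctan r - r) (f' := fun r : ℝ => 1/(1+r^2) - 1)
    (g := fun r : ℝ => r ^ 3) (g' := fun r : ℝ => 3 * r ^ 2) (a := (0:ℝ)) (l := nhds (-(1/3)))
    ?_ ?_ ?_ ?_ ?_ ?_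
  · exact h
  · filter_upwards with x
    have h1 : HasDerivAt Real.arctan (1/(1+x^2)) x := by
      simpa [one_div, sq] using Real.hasDerivAt_arctan x
    simpa [Pi.sub_def] using h1.sub (hasDerivAt_id' x)
  · filter_upwards with x
    simpa using (hasDerivAt_pow 3 x)
  · filter_upwards [self_mem_nhdsWithin] with x hx
    have : x ≠ 0 := hx
    positivity
  · have : Tendsto (fun r : ℝ => Real.arctan r - r) (nhds 0) (nhds 0) := by
      have := (Real.continuous_arctan.sub continuous_id').tendsto 0
      simpa [Pi.sub_def] using this
    exact this.mono_left nhdsWithin_le_nhds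
  · have : Tendsto (fun r : ℝ => r ^ 3) (nhds (0:ℝ)) (nhds 0) := by
      simpa using (continuous_pow 3).tendsto (0:ℝ)
    exact this.mono_left nhdsWithin_le_nhds
  · have hc : Tendsto (fun r : ℝ => -(1 / (3 * (1 + r ^ 2)))) (nhds 0) (nhds (-(1/3))) := by
      have : Continuous fun r : ℝ => -(1 / (3 * (1 + r ^ 2))) := by
        apply Continuous.neg
        apply Continuous.div continuous_const
        · continuity
        · intro x; positivity
      simpa using this.tendsto 0
    refine (hc.mono_left nhdsWithin_le_nhds).congr' ?_
    filter_upwards [self_mem_nhdsWithin] with x hx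
    have hx0 : x ≠ 0 := hx
    have h2 : (1:ℝ) + x ^ 2 ≠ 0 := by positivity
    field_simp
    ring

set_option maxHeartbeats 1600000 in
theorem first_relativistic_transport_coefficient (lam : ℝ) (hlam : 0 < lam) :
    Tendsto (fun r => Gam lam r / qfun lam r ^ 2) (nhdsWithin 0 {0}ᶜ)
      (nhds (-lam / (3 * (1 + lam)))) := by
  have hB : (0:ℝ) < (1 + lam) / 2 := by linarith
  -- arctan r / r → 1
  have hg : Tendsto (fun r : ℝ => Real.arctan r / r) (nhdsWithin 0 {0}ᶜ) (nhds 1) := by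
    have h := Real.hasDerivAt_arctan 0
    rw [hasDerivAt_iff_tendsto_slope] at h
    have h2 : (slope Real.arctan 0) = fun r => Real.arctan r / r := by
      funext r; rw [slope_def_field]; simp
    rw [h2] at h
    simpa using h
  -- S → (1+λ)/2
  have hS : Tendsto (fun r => Sfun lam r) (nhdsWithin 0 {0}ᶜ) (nhds ((1 + lam) / 2)) := by
    have h1 : Tendsto (fun r : ℝ => ((1 - lam) / 2) ^ 2 + lam * Real.arctan r / r)
        (nhdsWithin 0 {0}ᶜ) (nhds (((1 - lam) / 2) ^ 2 + lam)) := by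
      have h0 : Tendsto (fun r : ℝ => ((1 - lam) / 2) ^ 2 + lam * (Real.arctan r / r))
          (nhdsWithin 0 {0}ᶜ) (nhds (((1 - lam) / 2) ^ 2 + lam * 1)) :=
        tendsto_const_nhds.add (hg.const_mul lam)
      rw [mul_one] at h0
      exact h0.congr fun r => by ring
    have h2 := (Real.continuous_sqrt.tendsto _).comp h1
    have h3 : Real.sqrt (((1 - lam) / 2) ^ 2 + lam) = (1 + lam) / 2 := by
      rw [show ((1 - lam) / 2) ^ 2 + lam = ((1 + lam) / 2) ^ 2 by ring]
      exact Real.sqrt_sq hB.le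
    simpa [Sfun, Function.comp_def, h3] using h2
  -- target limit of the nice form
  have hmain : Tendsto
      (fun r => lam * ((Real.arctan r - r) / r ^ 3) /
        ((Sfun lam r + (1 + lam) / 2) * ((1 - lam) / 2 + Sfun lam r) ^ 2))
      (nhdsWithin 0 {0}ᶜ) (nhds (-lam / (3 * (1 + lam)))) := by
    have hnum := arctan_cubic_limit.const_mul lam
    have hden : Tendsto (fun r => (Sfun lam r + (1 + lam) / 2) * ((1 - lam) / 2 + Sfun lam r) ^ 2)
        (nhdsWithin 0 {0}ᶜ)
        (nhds (((1 + lam) / 2 + (1 + lam) / 2) * ((1 - lam) / 2 + (1 + lam) / 2) ^ 2)) := by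
      exact (hS.add tendsto_const_nhds).mul ((tendsto_const_nhds.add hS).pow 2)
    have hden' : ((1 + lam) / 2 + (1 + lam) / 2) * ((1 - lam) / 2 + (1 + lam) / 2) ^ 2 = 1 + lam := by
      ring
    rw [hden'] at hden
    have h1l : (1:ℝ) + lam ≠ 0 := by linarith
    have heq : -lam / (3 * (1 + lam)) = lam * (-(1/3)) / (1 + lam) := by
      field_simp
    rw [heq]
    exact hnum.div hden h1l
  -- eventual equality
  refine hmain.congr' ?_
  have hSev : ∀ᶠ r in nhdsWithin (0:ℝ) {0}ᶜ, (1 - lam) / 2 + Sfun lam r > 1/2 := by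
    have := hS.const_add ((1 - lam) / 2)
    have h := this.eventually (eventually_gt_nhds (by linarith : (1:ℝ)/2 < (1 - lam)/2 + (1+lam)/2))
    exact h
  filter_upwards [self_mem_nhdsWithin, hSev] with r hr hpos
  have hr0 : r ≠ 0 := hr
  have hS0 : 0 ≤ Sfun lam r := Real.sqrt_nonneg _
  have hsq : Sfun lam r ^ 2 = ((1 - lam) / 2) ^ 2 + lam * Real.arctan r / r := by
    rw [Sfun, sq_sqrt]
    have harg : 0 < Real.arctan r / r := by
      rcases lt_or_gt_of_ne hr0 with h | h
      · have ha : Real.arctan r < 0 := by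
          simpa [Real.arctan_zero] using Real.arctan_strictMono h
        exact div_pos_of_neg_of_neg ha h
      · have ha : 0 < Real.arctan r := by
          simpa [Real.arctan_zero] using Real.arctan_strictMono h
        exact div_pos ha h
    have : 0 < lam * Real.arctan r / r := by
      rw [mul_div_assoc]; exact mul_pos hlam harg
    positivity
  -- Γ = λ(g−1)/(S+B)
  have hSB : Sfun lam r + (1 + lam) / 2 > 0 := by linarith
  have hGam : Gam lam r = lam * ((Real.arctan r - r) / r) / (Sfun lam r + (1 + lam) / 2) := by
    have h1 : Gam lam r * (Sfun lam r + (1 + lam) / 2) = lam * ((Real.arctan r - r) / r) := by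
      have : Gam lam r * (Sfun lam r + (1 + lam) / 2)
          = Sfun lam r ^ 2 - ((1 + lam) / 2) ^ 2 := by rw [Gam]; ring
      rw [this, hsq]
      field_simp
      ring
    field_simp [hSB.ne'] at h1 ⊢
    linarith [h1]
  rw [hGam, qfun]
  rw [mul_pow]
  have hd1 : ((1 - lam) / 2 + Sfun lam r) ≠ 0 := by linarith
  field_simp
end
end

section
/- Second relativistic transport coefficient: let λ > 0 and, for r ∈ ℝ∖{0}, define S(r) = √( ((1−λ)/2)² + λ·arctan(r)/r ), Γ(r) = −(1+λ)/2 + S(r), and q(r) = r·( (1−λ)/2 + S(r) ). Then lim_{r→0} [ Γ(r) + (λ/(3(1+λ)))·q(r)² ] / q(r)⁴ = λ(9 + 3λ − λ²)/(45(1+λ)³). (Equivalently, the exact relativistic super-Burnett coefficient is D⁽³⁾/τ³ = λ(9+3λ−λ²)/(45(1+λ)³), replacing Spiegel's value λ/5.) -/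
/-!
Statement 15: second relativistic transport coefficient: along the parametric
solution `(q(r), Γ(r))` of the exact scatteringless dispersion relation,
`(Γ(r) + (λ/(3(1+λ)))q(r)²)/q(r)⁴ → λ(9+3λ−λ²)/(45(1+λ)³)` as `r → 0`, i.e.
the super-Burnett coefficient is `D⁽³⁾/τ³ = λ(9+3λ−λ²)/(45(1+λ)³)`.
-/

noncomputable section
open Real Filter

/-- Key algebraic identity behind the super-Burnett expansion. -/
lemma key_ident_aux (lam r s t U D : ℝ) (hr : r ≠ 0) (h1l : (1:ℝ) + lam ≠ 0)
    (hsb : s + (1 + lam) / 2 ≠ 0)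
    (hU : t - 1 + r ^ 2 / 3 = U * r ^ 4)
    (hD : s - (1 + lam) / 2 = D * r ^ 2) :
    (lam * (t - 1) / (s + (1 + lam) / 2)
        + lam / (3 * (1 + lam)) * (r * ((1 - lam) / 2 + s)) ^ 2) / r ^ 4
      = lam * U / (s + (1 + lam) / 2)
        + lam * ( D * (1 + 4 * ((1 + lam) / 2))
            + (s - (1 + lam) / 2) * D * (2 + 2 * ((1 + lam) / 2))
            + (s - (1 + lam) / 2) ^ 2 * D )
          / (6 * ((1 + lam) / 2) * (s + (1 + lam) / 2)) := by
  have ht : t = U * r ^ 4 + 1 - r ^ 2 / 3 := by linarith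
  have hs : s = D * r ^ 2 + (1 + lam) / 2 := by linarith
  have hr4 : r ^ 4 ≠ 0 := pow_ne_zero 4 hr
  have h6b : 6 * ((1 + lam) / 2) ≠ 0 := by
    intro h; apply h1l; linarith
  have h6bB : 6 * ((1 + lam) / 2) * (s + (1 + lam) / 2) ≠ 0 := mul_ne_zero h6b hsb
  rw [div_add' _ _ _ hsb, div_div, div_add_div _ _ hsb h6bB,
    div_eq_div_iff (mul_ne_zero hsb (pow_ne_zero 4 hr)) (mul_ne_zero hsb h6bB)]
  field_simp
  subst ht hs
  ring

/-- Quantitative Taylor remainder bound for `arctan`. -/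
lemma arctan_taylor_bound (r : ℝ) :
    |Real.arctan r - r + r ^ 3 / 3 - r ^ 5 / 5| ≤ |r| ^ 6 * |r| := by
  have hder : ∀ t : ℝ, HasDerivAt (fun x : ℝ => Real.arctan x - x + x ^ 3 / 3 - x ^ 5 / 5)
      (1 / (1 + t ^ 2) - 1 + t ^ 2 - t ^ 4) t := by
    intro t
    have h1 := Real.hasDerivAt_arctan t
    have h2 : HasDerivAt (fun x : ℝ => x) 1 t := hasDerivAt_id t
    have h3 : HasDerivAt (fun x : ℝ => x ^ 3 / 3) (t ^ 2) t := by
      have := (hasDerivAt_pow 3 t).div_const 3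
      refine this.congr_deriv ?_
      push_cast
      ring
    have h5 : HasDerivAt (fun x : ℝ => x ^ 5 / 5) (t ^ 4) t := by
      have := (hasDerivAt_pow 5 t).div_const 5
      refine this.congr_deriv ?_
      push_cast
      ring
    exact ((h1.sub h2).add h3).sub h5
  have key := Convex.norm_image_sub_le_of_norm_hasDerivWithin_le
    (f := fun x : ℝ => Real.arctan x - x + x ^ 3 / 3 - x ^ 5 / 5)
    (f' := fun t : ℝ => 1 / (1 + t ^ 2) - 1 + t ^ 2 - t ^ 4)
    (s := Set.Icc (-|r|) |r|)
    (fun t _ => (hder t).hasDerivWithinAt)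
    (C := |r| ^ 6)
    (fun t ht => by
      obtain ⟨ht1, ht2⟩ := Set.mem_Icc.mp ht
      have habs : |t| ≤ |r| := abs_le.mpr ⟨ht1, ht2⟩
      have h1t : (0:ℝ) < 1 + t ^ 2 := by positivity
      have heq : 1 / (1 + t ^ 2) - 1 + t ^ 2 - t ^ 4 = -(t ^ 6 / (1 + t ^ 2)) := by
        field_simp
        ring
      show |1 / (1 + t ^ 2) - 1 + t ^ 2 - t ^ 4| ≤ |r| ^ 6
      rw [heq, abs_neg, abs_of_nonneg (by positivity : (0:ℝ) ≤ t ^ 6 / (1 + t ^ 2))]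
      have h1 : t ^ 6 / (1 + t ^ 2) ≤ t ^ 6 := by
        apply div_le_self (by positivity)
        nlinarith [sq_nonneg t]
      have h2 : t ^ 6 ≤ |r| ^ 6 := by
        calc t ^ 6 = |t| ^ 6 := by rw [← abs_pow, abs_of_nonneg (by positivity)]
          _ ≤ |r| ^ 6 := pow_le_pow_left₀ (abs_nonneg t) habs 6
      linarith)
    (convex_Icc _ _)
    (Set.mem_Icc.mpr ⟨neg_nonpos.mpr (abs_nonneg r), abs_nonneg r⟩)
    (Set.mem_Icc.mpr ⟨neg_abs_le r, le_abs_self r⟩)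
  simpa [Real.norm_eq_abs, Real.arctan_zero] using key

theorem second_relativistic_transport_coefficient (lam : ℝ) (hlam : 0 < lam) :
    Tendsto (fun r => (Gam lam r + (lam / (3 * (1 + lam))) * qfun lam r ^ 2) / qfun lam r ^ 4)
      (nhdsWithin 0 {0}ᶜ)
      (nhds (lam * (9 + 3 * lam - lam ^ 2) / (45 * (1 + lam) ^ 3))) := by
  have h1l : (0:ℝ) < 1 + lam := by linarith
  have hb : (0:ℝ) < (1 + lam) / 2 := by linarith
  -- the radicand is nonnegative
  have hrad : ∀ r : ℝ, 0 ≤ ((1 - lam) / 2) ^ 2 + lam * Real.arctan r / r := by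
    intro r
    have hdiv : 0 ≤ lam * Real.arctan r / r := by
      rcases le_or_gt 0 r with h | h
      · have : 0 ≤ Real.arctan r := by
          have := Real.arctan_strictMono.monotone h
          simpa [Real.arctan_zero] using this
        exact div_nonneg (mul_nonneg hlam.le this) h
      · have : Real.arctan r ≤ 0 := by
          have := Real.arctan_strictMono.monotone h.le
          simpa [Real.arctan_zero] using this
        exact div_nonneg_of_nonpos (mul_nonpos_of_nonneg_of_nonpos hlam.le this) h.le
    exact add_nonneg (sq_nonneg _) hdiv
  have hs2 : ∀ r : ℝ, Sfun lam r ^ 2 = ((1 - lam) / 2) ^ 2 + lam * Real.arctan r / r :=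
    fun r => Real.sq_sqrt (hrad r)
  have hsnn : ∀ r : ℝ, 0 ≤ Sfun lam r := fun r => Real.sqrt_nonneg _
  have hBpos : ∀ r : ℝ, 0 < Sfun lam r + (1 + lam) / 2 := fun r => by
    have := hsnn r; linarith
  have hgam : ∀ r : ℝ, -(1 + lam) / 2 + Sfun lam r
      = lam * (Real.arctan r / r - 1) / (Sfun lam r + (1 + lam) / 2) := by
    intro r
    rw [eq_div_iff (hBpos r).ne']
    linear_combination hs2 r
  -- eventual nonvanishing
  have hne : ∀ᶠ r : ℝ in nhdsWithin 0 {0}ᶜ, r ≠ 0 := by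
    filter_upwards [self_mem_nhdsWithin] with r hr using hr
  -- power limits
  have hpow : ∀ n : ℕ, 0 < n → Tendsto (fun r : ℝ => r ^ n) (nhdsWithin 0 {0}ᶜ) (nhds 0) := by
    intro n hn
    have h := (continuous_pow n).tendsto (0 : ℝ)
    rw [zero_pow hn.ne'] at h
    exact h.mono_left nhdsWithin_le_nhds
  -- Taylor limit
  have hF5 : Tendsto (fun r => (Real.arctan r - r + r ^ 3 / 3 - r ^ 5 / 5) / r ^ 5)
      (nhdsWithin 0 {0}ᶜ) (nhds 0) := by
    have hev : ∀ᶠ r : ℝ in nhdsWithin 0 {0}ᶜ,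
        ‖(Real.arctan r - r + r ^ 3 / 3 - r ^ 5 / 5) / r ^ 5‖ ≤ r ^ 2 := by
      filter_upwards [hne] with r hr
      have hr' : (0:ℝ) < |r| := abs_pos.mpr hr
      rw [Real.norm_eq_abs, abs_div, abs_pow, div_le_iff₀ (by positivity)]
      calc |Real.arctan r - r + r ^ 3 / 3 - r ^ 5 / 5| ≤ |r| ^ 6 * |r| := arctan_taylor_bound r
        _ = r ^ 2 * |r| ^ 5 := by rw [← sq_abs]; ring
    exact squeeze_zero_norm' hev (hpow 2 (by norm_num))
  -- the fourth-order limit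
  have hY : Tendsto (fun r => (Real.arctan r / r - 1 + r ^ 2 / 3) / r ^ 4)
      (nhdsWithin 0 {0}ᶜ) (nhds (1 / 5)) := by
    have h : Tendsto (fun r => (Real.arctan r - r + r ^ 3 / 3 - r ^ 5 / 5) / r ^ 5 + 1 / 5)
        (nhdsWithin 0 {0}ᶜ) (nhds (0 + 1 / 5)) := hF5.add_const _
    rw [zero_add] at h
    refine h.congr' ?_
    filter_upwards [hne] with r hr
    field_simp
    ring
  -- second-order limit
  have hx : Tendsto (fun r => (Real.arctan r / r - 1) / r ^ 2)
      (nhdsWithin 0 {0}ᶜ) (nhds (-(1 / 3))) := by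
    have h : Tendsto (fun r => ((Real.arctan r / r - 1 + r ^ 2 / 3) / r ^ 4) * r ^ 2 - 1 / 3)
        (nhdsWithin 0 {0}ᶜ) (nhds ((1 / 5) * 0 - 1 / 3)) :=
      (hY.mul (hpow 2 (by norm_num))).sub_const _
    have he : ((1:ℝ) / 5) * 0 - 1 / 3 = -(1 / 3) := by norm_num
    rw [he] at h
    refine h.congr' ?_
    filter_upwards [hne] with r hr
    have hr4 : r ^ 4 ≠ 0 := pow_ne_zero 4 hr
    field_simp
    ring
  -- arctan r / r → 1
  have hu : Tendsto (fun r => Real.arctan r / r - 1) (nhdsWithin 0 {0}ᶜ) (nhds 0) := by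
    have h : Tendsto (fun r => ((Real.arctan r / r - 1) / r ^ 2) * r ^ 2)
        (nhdsWithin 0 {0}ᶜ) (nhds (-(1 / 3) * 0)) := hx.mul (hpow 2 (by norm_num))
    rw [mul_zero] at h
    refine h.congr' ?_
    filter_upwards [hne] with r hr
    exact div_mul_cancel₀ _ (pow_ne_zero 2 hr)
  -- S → (1+λ)/2
  have hs : Tendsto (fun r => Sfun lam r) (nhdsWithin 0 {0}ᶜ) (nhds ((1 + lam) / 2)) := by
    have harg : Tendsto (fun r => ((1 - lam) / 2) ^ 2 + lam * Real.arctan r / r)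
        (nhdsWithin 0 {0}ᶜ) (nhds (((1 - lam) / 2) ^ 2 + lam * 1)) := by
      have h1 : Tendsto (fun r => Real.arctan r / r) (nhdsWithin 0 {0}ᶜ) (nhds 1) := by
        have := hu.add_const 1
        rw [zero_add] at this
        refine this.congr fun r => by ring
      have h2 := h1.const_mul lam
      refine (tendsto_const_nhds.add h2).congr fun r => by rw [mul_div_assoc]
    have hc := (Real.continuous_sqrt.tendsto _).comp harg
    have he : Real.sqrt (((1 - lam) / 2) ^ 2 + lam * 1) = (1 + lam) / 2 := by
      rw [show ((1 - lam) / 2) ^ 2 + lam * 1 = ((1 + lam) / 2) ^ 2 by ring]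
      exact Real.sqrt_sq hb.le
    rw [he] at hc
    exact hc.congr fun r => rfl
  have hSb : Tendsto (fun r => Sfun lam r + (1 + lam) / 2) (nhdsWithin 0 {0}ᶜ)
      (nhds ((1 + lam) / 2 + (1 + lam) / 2)) := hs.add_const _
  have h2b : (1 + lam) / 2 + (1 + lam) / 2 ≠ 0 := by positivity
  have hd : Tendsto (fun r => Sfun lam r - (1 + lam) / 2) (nhdsWithin 0 {0}ᶜ) (nhds 0) := by
    have := hs.sub_const ((1 + lam) / 2)
    rwa [sub_self] at this
  -- (S - b)/r² → -λ/(6b)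
  have hD : Tendsto (fun r => (Sfun lam r - (1 + lam) / 2) / r ^ 2) (nhdsWithin 0 {0}ᶜ)
      (nhds (lam * -(1 / 3) / ((1 + lam) / 2 + (1 + lam) / 2))) := by
    have h : Tendsto (fun r => lam * ((Real.arctan r / r - 1) / r ^ 2) / (Sfun lam r + (1 + lam) / 2))
        (nhdsWithin 0 {0}ᶜ) (nhds (lam * -(1 / 3) / ((1 + lam) / 2 + (1 + lam) / 2))) :=
      (hx.const_mul lam).div hSb h2b
    refine h.congr fun r => ?_
    rw [show Sfun lam r - (1 + lam) / 2 = -(1 + lam) / 2 + Sfun lam r by ring, hgam r]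
    ring
  -- assemble the model function limit
  have hterm1 : Tendsto (fun r => lam * ((Real.arctan r / r - 1 + r ^ 2 / 3) / r ^ 4)
      / (Sfun lam r + (1 + lam) / 2)) (nhdsWithin 0 {0}ᶜ)
      (nhds (lam * (1 / 5) / ((1 + lam) / 2 + (1 + lam) / 2))) :=
    (hY.const_mul lam).div hSb h2b
  have hden2 : Tendsto (fun r => 6 * ((1 + lam) / 2) * (Sfun lam r + (1 + lam) / 2))
      (nhdsWithin 0 {0}ᶜ)
      (nhds (6 * ((1 + lam) / 2) * ((1 + lam) / 2 + (1 + lam) / 2))) := hSb.const_mul _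
  have h6bB : 6 * ((1 + lam) / 2) * ((1 + lam) / 2 + (1 + lam) / 2) ≠ 0 := by positivity
  have hnum2 : Tendsto (fun r => (Sfun lam r - (1 + lam) / 2) / r ^ 2 * (1 + 4 * ((1 + lam) / 2))
        + (Sfun lam r - (1 + lam) / 2) * ((Sfun lam r - (1 + lam) / 2) / r ^ 2) * (2 + 2 * ((1 + lam) / 2))
        + (Sfun lam r - (1 + lam) / 2) ^ 2 * ((Sfun lam r - (1 + lam) / 2) / r ^ 2))
      (nhdsWithin 0 {0}ᶜ)
      (nhds (lam * -(1 / 3) / ((1 + lam) / 2 + (1 + lam) / 2) * (1 + 4 * ((1 + lam) / 2))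
        + 0 * (lam * -(1 / 3) / ((1 + lam) / 2 + (1 + lam) / 2)) * (2 + 2 * ((1 + lam) / 2))
        + 0 ^ 2 * (lam * -(1 / 3) / ((1 + lam) / 2 + (1 + lam) / 2)))) :=
    ((hD.mul_const _).add ((hd.mul hD).mul_const _)).add ((hd.pow 2).mul hD)
  have hterm2 := (hnum2.const_mul lam).div hden2 h6bB
  have hM := hterm1.add hterm2
  have hA4 : Tendsto (fun r => ((1 - lam) / 2 + Sfun lam r) ^ 4) (nhdsWithin 0 {0}ᶜ)
      (nhds (((1 - lam) / 2 + (1 + lam) / 2) ^ 4)) := (hs.const_add _).pow 4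
  have hA1 : ((1 - lam) / 2 + (1 + lam) / 2) ^ 4 ≠ 0 := by
    rw [show (1 - lam) / 2 + (1 + lam) / 2 = 1 by ring]
    norm_num
  have hT := hM.div hA4 hA1
  -- identify the limit value
  have hval : (lam * (1 / 5) / ((1 + lam) / 2 + (1 + lam) / 2)
      + lam * (lam * -(1 / 3) / ((1 + lam) / 2 + (1 + lam) / 2) * (1 + 4 * ((1 + lam) / 2))
        + 0 * (lam * -(1 / 3) / ((1 + lam) / 2 + (1 + lam) / 2)) * (2 + 2 * ((1 + lam) / 2))
        + 0 ^ 2 * (lam * -(1 / 3) / ((1 + lam) / 2 + (1 + lam) / 2)))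
        / (6 * ((1 + lam) / 2) * ((1 + lam) / 2 + (1 + lam) / 2)))
      / (((1 - lam) / 2 + (1 + lam) / 2) ^ 4)
      = lam * (9 + 3 * lam - lam ^ 2) / (45 * (1 + lam) ^ 3) := by
    field_simp
    ring
  rw [hval] at hT
  -- finish via the algebraic identity
  refine hT.congr' ?_
  filter_upwards [hne] with r hr
  have hr4 : r ^ 4 ≠ 0 := pow_ne_zero 4 hr
  have hr2 : r ^ 2 ≠ 0 := pow_ne_zero 2 hr
  have hU : Real.arctan r / r - 1 + r ^ 2 / 3
      = (Real.arctan r / r - 1 + r ^ 2 / 3) / r ^ 4 * r ^ 4 := (div_mul_cancel₀ _ hr4).symm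
  have hDd : Sfun lam r - (1 + lam) / 2
      = (Sfun lam r - (1 + lam) / 2) / r ^ 2 * r ^ 2 := (div_mul_cancel₀ _ hr2).symm
  have hkey := key_ident_aux lam r (Sfun lam r) (Real.arctan r / r)
    ((Real.arctan r / r - 1 + r ^ 2 / 3) / r ^ 4)
    ((Sfun lam r - (1 + lam) / 2) / r ^ 2)
    hr h1l.ne' (hBpos r).ne' hU hDd
  simp only [Pi.div_apply]
  rw [← hkey]
  simp only [Gam, qfun]
  rw [hgam r, div_div, ← mul_pow]
end
end
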